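/- Let P and Q be nonzero integers with D = P^2 - 4Q ≠ 0, let U = U(P,Q) be nondegenerate, and let p be a prime with p ∣ D and p ∤ gcd(P,Q). Then for every n ≥ 1 with gcd(p,n) = 1 and every k ≥ 1 there exists an integer t such that U_{p^k n} = (p + p^k·t)·U_{p^{k-1} n}. -/

import Mathlib

/-!
Put `m = p^(k-1) n`. The multiplication formula `U_{pm} = U_p(V_m, Q^m) U_m` reduces the claim
to `U_p(V_m, Q^m) ≡ p [ZMOD p^k]`. The pair `(V_m, Q^m)` has discriminant `D U_m^2`, and
`p^(k-1) ∣ U_m` (by the same formula, inductively), so this discriminant vanishes modulo `p^k`.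
For odd `p` the characteristic polynomial `x^2 - V_m x + Q^m` then has the double root `V_m / 2`
modulo `p^k`, whence `U_p(V_m, Q^m) ≡ p (V_m/2)^(p-1) ≡ p Q^(m(p-1)/2)`; finally
`Q^((p-1)/2) ≡ 1 [ZMOD p]` because `Q ≡ (P/2)^2` is a nonzero square, and raising to the power
`m = p^(k-1) n` lifts this to `Q^(m(p-1)/2) ≡ 1 [ZMOD p^k]`. For `p = 2` we have
`U_2(V_m, Q^m) = V_m`, and `V_{2^(k-1) n} ≡ 2 [ZMOD 2^k]` follows by induction on `k` from
`V_{2m} = V_m^2 - 2 Q^m` with `Q` odd.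
-/

/-- Lucas sequence of the first kind: `U 0 = 0`, `U 1 = 1`,
`U (n+2) = P * U (n+1) - Q * U n`. -/
def lucasU (P Q : ℤ) : ℕ → ℤ
  | 0 => 0
  | 1 => 1
  | n + 2 => P * lucasU P Q (n + 1) - Q * lucasU P Q n

section Identities

variable (P Q : ℤ)

@[simp] lemma lucasU_zero : lucasU P Q 0 = 0 := rfl

@[simp] lemma lucasU_one : lucasU P Q 1 = 1 := rfl

lemma lucasU_add_two (n : ℕ) :
    lucasU P Q (n + 2) = P * lucasU P Q (n + 1) - Q * lucasU P Q n := rfl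

@[simp] lemma lucasU_two : lucasU P Q 2 = P := by simp [lucasU_add_two]

lemma lucasU_add (m n : ℕ) :
    lucasU P Q (m + n + 1)
      = lucasU P Q (m + 1) * lucasU P Q (n + 1) - Q * lucasU P Q m * lucasU P Q n := by
  induction m using Nat.twoStepInduction with
  | zero => simp
  | one => simp [add_comm 1 n, lucasU_add_two]
  | more m ih₀ ih₁ =>
    rw [show m + 2 + n + 1 = m + n + 1 + 2 by omega, lucasU_add_two,
      show m + n + 1 + 1 = m + 1 + n + 1 by omega, ih₀, ih₁, lucasU_add_two P Q (m + 1),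
      lucasU_add_two P Q m]
    ring

lemma lucasU_cassini (m : ℕ) :
    lucasU P Q (m + 1) ^ 2 - P * lucasU P Q (m + 1) * lucasU P Q m + Q * lucasU P Q m ^ 2
      = Q ^ m := by
  induction m with
  | zero => simp
  | succ m ih => rw [lucasU_add_two, pow_succ]; linear_combination Q * ih

/-- The Lucas sequence of the second kind. -/
def lucasV (n : ℕ) : ℤ := 2 * lucasU P Q (n + 1) - P * lucasU P Q n

lemma lucasV_sq_sub_four_mul_pow (m : ℕ) :
    lucasV P Q m ^ 2 - 4 * Q ^ m = (P ^ 2 - 4 * Q) * lucasU P Q m ^ 2 := by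
  rw [lucasV, ← lucasU_cassini P Q m]; ring

lemma lucasU_two_mul (m : ℕ) : lucasU P Q (2 * m) = lucasV P Q m * lucasU P Q m := by
  cases m with
  | zero => simp
  | succ m =>
    rw [show 2 * (m + 1) = m + (m + 1) + 1 by ring, lucasU_add, lucasV, lucasU_add_two]
    ring

lemma lucasU_two_mul_add_one (m : ℕ) :
    lucasU P Q (2 * m + 1) = lucasV P Q m * lucasU P Q (m + 1) - Q ^ m := by
  rw [two_mul, lucasU_add, lucasV, ← lucasU_cassini P Q m]; ring

lemma lucasU_add_two_mul (a m : ℕ) :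
    lucasU P Q (a + 2 * m) = lucasV P Q m * lucasU P Q (a + m) - Q ^ m * lucasU P Q a := by
  induction a using Nat.twoStepInduction with
  | zero => simp [lucasU_two_mul]
  | one => rw [add_comm 1, add_comm 1, lucasU_two_mul_add_one]; simp
  | more a ih₀ ih₁ =>
    rw [show a + 2 + 2 * m = a + 2 * m + 2 by omega, show a + 2 + m = a + m + 2 by omega,
      lucasU_add_two, lucasU_add_two P Q (a + m), lucasU_add_two P Q a,
      show a + 2 * m + 1 = a + 1 + 2 * m by omega, show a + m + 1 = a + 1 + m by omega, ih₀, ih₁]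
    ring

lemma lucasU_mul (l m : ℕ) :
    lucasU P Q (l * m) = lucasU (lucasV P Q m) (Q ^ m) l * lucasU P Q m := by
  induction l using Nat.twoStepInduction with
  | zero => simp
  | one => simp
  | more l ih₀ ih₁ =>
    rw [show (l + 2) * m = l * m + 2 * m by ring, lucasU_add_two_mul,
      show l * m + m = (l + 1) * m by ring, ih₀, ih₁, lucasU_add_two]
    ring

lemma lucasV_two_mul (m : ℕ) : lucasV P Q (2 * m) = lucasV P Q m ^ 2 - 2 * Q ^ m := by
  rw [lucasV, lucasU_two_mul_add_one, lucasU_two_mul, lucasV]; ring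

end Identities

lemma lucasU_succ_cast_of_double_root {R : Type*} [CommRing R] {A B : ℤ} {r : R}
    (hA : (A : R) = 2 * r) (hB : (B : R) = r ^ 2) (j : ℕ) :
    (lucasU A B (j + 1) : R) = (j + 1) * r ^ j := by
  induction j using Nat.twoStepInduction with
  | zero => simp
  | one => simp [hA]; ring
  | more j ih₀ ih₁ =>
    rw [lucasU_add_two]
    push_cast at ih₀ ih₁ ⊢
    rw [ih₀, ih₁, hA, hB]
    ring

lemma pow_succ_dvd_pow_prime_pow_mul_sub_one {R : Type*} [CommRing R] {p : ℕ} {x : R}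
    (h : (p : R) ∣ x - 1) (k n : ℕ) : (p : R) ^ (k + 1) ∣ x ^ (p ^ k * n) - 1 := by
  have hk := dvd_sub_pow_of_dvd_sub h k
  rw [one_pow] at hk
  simpa [pow_mul] using hk.trans (sub_dvd_pow_sub_pow (x ^ p ^ k) 1 n)

lemma pow_succ_dvd_lucasU_prime_sub_self {p : ℕ} (hp : p.Prime) (hp2 : p ≠ 2) {A B : ℤ} {k : ℕ}
    (hΔ : (p : ℤ) ^ (k + 1) ∣ A ^ 2 - 4 * B) (hB : (p : ℤ) ^ k ∣ B ^ (p / 2) - 1) :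
    (p : ℤ) ^ (k + 1) ∣ lucasU A B p - p := by
  obtain ⟨e, rfl⟩ : ∃ e, p = 2 * e + 1 := hp.eq_two_or_odd'.resolve_left hp2
  rw [show (2 * e + 1) / 2 = e by omega] at hB
  set N := (2 * e + 1) ^ (k + 1)
  have hcast (z : ℤ) : (z : ZMod N) = 0 ↔ ((2 * e + 1 : ℕ) : ℤ) ^ (k + 1) ∣ z := by
    rw [ZMod.intCast_zmod_eq_zero_iff_dvd, Nat.cast_pow]
  have h2 : IsUnit ((2 : ℕ) : ZMod N) :=
    (ZMod.isUnit_natCast_iff_not_dvd_pow hp k.succ_pos).mpr fun h ↦ by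
      have := (Nat.prime_dvd_prime_iff_eq hp Nat.prime_two).mp h; omega
  obtain ⟨u, hu⟩ := h2.exists_right_inv
  rw [Nat.cast_ofNat] at hu
  have hΔ' : (A : ZMod N) ^ 2 - 4 * B = 0 := by exact_mod_cast (hcast _).mpr hΔ
  have hB' : ((2 * e + 1 : ℕ) : ZMod N) * ((B : ZMod N) ^ e - 1) = 0 := by
    exact_mod_cast (hcast _).mpr (pow_succ' (_ : ℤ) k ▸ mul_dvd_mul_left _ hB)
  -- Modulo `p^(k+1)`, `x^2 - A x + B` has the double root `A / 2 = u A`.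
  have hA : (A : ZMod N) = 2 * (u * A) := by linear_combination (-A) * hu
  have hr : (B : ZMod N) = (u * A) ^ 2 := by
    linear_combination (-u ^ 2) * hΔ' - (2 * u + 1) * B * hu
  rw [← hcast]
  push_cast
  rw [lucasU_succ_cast_of_double_root hA hr, pow_mul, ← hr]
  push_cast at hB' ⊢
  linear_combination hB'

lemma prime_dvd_lucasU_self {p : ℕ} (hp : p.Prime) {A B : ℤ} (hΔ : (p : ℤ) ∣ A ^ 2 - 4 * B) :
    (p : ℤ) ∣ lucasU A B p := by
  rcases eq_or_ne p 2 with rfl | hp2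
  · have h4 : (2 : ℤ) ∣ 4 * B := ⟨2 * B, by ring⟩
    rw [lucasU_two]
    exact Int.prime_two.dvd_of_dvd_pow (n := 2) ((dvd_sub_left h4).mp (by exact_mod_cast hΔ))
  · simpa using pow_succ_dvd_lucasU_prime_sub_self hp hp2 (k := 0) (by simpa using hΔ) (by simp)

lemma pow_dvd_lucasU_prime_pow_mul {p : ℕ} (hp : p.Prime) {P Q : ℤ}
    (hD : (p : ℤ) ∣ P ^ 2 - 4 * Q) (k n : ℕ) : (p : ℤ) ^ k ∣ lucasU P Q (p ^ k * n) := by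
  induction k with
  | zero => simp
  | succ k ih =>
    rw [pow_succ', pow_succ', mul_assoc, lucasU_mul]
    refine mul_dvd_mul (prime_dvd_lucasU_self hp ?_) ih
    rw [lucasV_sq_sub_four_mul_pow]
    exact dvd_mul_of_dvd_left hD _

lemma prime_dvd_pow_div_two_sub_one {p : ℕ} (hp : p.Prime) (hp2 : p ≠ 2) {P Q : ℤ}
    (hD : (p : ℤ) ∣ P ^ 2 - 4 * Q) (hPQ : ¬ ((p : ℤ) ∣ P ∧ (p : ℤ) ∣ Q)) :
    (p : ℤ) ∣ Q ^ (p / 2) - 1 := by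
  have := Fact.mk hp
  simp only [← ZMod.intCast_zmod_eq_zero_iff_dvd] at hD hPQ ⊢
  push_cast at hD hPQ ⊢
  have h2 : (2 : ZMod p) ≠ 0 := Ring.two_ne_zero (by rwa [ZMod.ringChar_zmod_n])
  have hQ : (Q : ZMod p) = (P / 2) ^ 2 := by
    field_simp
    linear_combination -hD
  have hr : (P : ZMod p) / 2 ≠ 0 := fun h ↦ hPQ ⟨by simpa [h2] using h, by rw [hQ, h]; simp⟩
  rw [hQ, ← pow_mul, Nat.two_mul_odd_div_two (Nat.odd_iff.mp (hp.odd_of_ne_two hp2)),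
    ZMod.pow_card_sub_one_eq_one hr, sub_self]

lemma two_pow_succ_dvd_lucasV_sub_two {P Q : ℤ} (hP : 2 ∣ P) (hQ : 2 ∣ Q - 1) (n k : ℕ) :
    2 ^ (k + 1) ∣ lucasV P Q (2 ^ k * n) - 2 := by
  induction k with
  | zero =>
    obtain ⟨c, rfl⟩ := hP
    exact ⟨lucasU (2 * c) Q (n + 1) - c * lucasU (2 * c) Q n - 1, by simp [lucasV]; ring⟩
  | succ k ih =>
    obtain ⟨t, ht⟩ := ih
    obtain ⟨s, hs⟩ := pow_succ_dvd_pow_prime_pow_mul_sub_one (p := 2) (by simpa using hQ) k n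
    push_cast at hs
    rw [pow_succ' (2 : ℕ), mul_assoc, lucasV_two_mul]
    exact ⟨2 * t - s + 2 ^ k * t ^ 2, by
      linear_combination (lucasV P Q (2 ^ k * n) + 2 + 2 ^ (k + 1) * t) * ht - 2 * hs⟩

lemma pow_succ_dvd_lucasU_lucasV_prime_sub_self {p : ℕ} (hp : p.Prime) {P Q : ℤ}
    (hD : (p : ℤ) ∣ P ^ 2 - 4 * Q) (hPQ : ¬ ((p : ℤ) ∣ P ∧ (p : ℤ) ∣ Q)) (k n : ℕ) :
    (p : ℤ) ^ (k + 1) ∣ lucasU (lucasV P Q (p ^ k * n)) (Q ^ (p ^ k * n)) p - p := by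
  rcases eq_or_ne p 2 with rfl | hp2
  · have hP : (2 : ℤ) ∣ P := by simpa using prime_dvd_lucasU_self Nat.prime_two hD
    rw [lucasU_two]
    push_cast
    exact two_pow_succ_dvd_lucasV_sub_two hP (by push_cast at hPQ; omega) n k
  · apply pow_succ_dvd_lucasU_prime_sub_self hp hp2
    · rw [lucasV_sq_sub_four_mul_pow, pow_succ']
      exact mul_dvd_mul hD
        ((pow_dvd_lucasU_prime_pow_mul hp hD k n).trans (dvd_pow_self _ two_ne_zero))
    · rw [← pow_mul, mul_comm, pow_mul]
      exact (pow_dvd_pow _ k.le_succ).trans (pow_succ_dvd_pow_prime_pow_mul_sub_one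
        (prime_dvd_pow_div_two_sub_one hp hp2 hD hPQ) k n)

theorem stmt_10_general (P Q : ℤ)
    (p : ℕ) (hp : p.Prime) (hpD : (p : ℤ) ∣ (P ^ 2 - 4 * Q))
    (hpPQ : ¬ p ∣ Int.gcd P Q)
    (n : ℕ) (k : ℕ) (hk : 1 ≤ k) :
    ∃ t : ℤ, lucasU P Q (p ^ k * n)
      = ((p : ℤ) + (p : ℤ) ^ k * t) * lucasU P Q (p ^ (k - 1) * n) := by
  obtain ⟨k, rfl⟩ := Nat.exists_eq_add_of_le' hk
  have hPQ : ¬ ((p : ℤ) ∣ P ∧ (p : ℤ) ∣ Q) := fun h ↦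
    hpPQ (Int.natCast_dvd_natCast.mp (Int.dvd_coe_gcd h.1 h.2))
  obtain ⟨t, ht⟩ := pow_succ_dvd_lucasU_lucasV_prime_sub_self hp hpD hPQ k n
  refine ⟨t, ?_⟩
  rw [Nat.add_sub_cancel, pow_succ', mul_assoc, lucasU_mul]
  linear_combination lucasU P Q (p ^ k * n) * ht

theorem stmt_10 (P Q : ℤ) (hP : P ≠ 0) (hQ : Q ≠ 0) (hD : P ^ 2 - 4 * Q ≠ 0)
    (hnd : ∀ m : ℕ, 1 ≤ m → lucasU P Q m ≠ 0)
    (p : ℕ) (hp : p.Prime) (hpD : (p : ℤ) ∣ (P ^ 2 - 4 * Q))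
    (hpPQ : ¬ p ∣ Int.gcd P Q)
    (n : ℕ) (hn : 1 ≤ n) (hpn : Nat.gcd p n = 1) (k : ℕ) (hk : 1 ≤ k) :
    ∃ t : ℤ, lucasU P Q (p ^ k * n)
      = ((p : ℤ) + (p : ℤ) ^ k * t) * lucasU P Q (p ^ (k - 1) * n) :=
  stmt_10_general P Q p hp hpD hpPQ n k hk
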